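/- arXiv:2507.18230 — 8 statements merged into one kernel-verified Lean document; each statement's English description precedes it below -/
import Mathlib

section
/- Let x ⋖ y be a covering relation in a finite lattice L. Then every maximal element of the set {z ∈ L : z ∧ y = x} is meet-irreducible, i.e., it is covered by exactly one element of L. -/
/-- Every maximal element of `{z : z ⊓ y = x}`, for a covering `x ⋖ y` in a
finite lattice, is meet-irreducible (it is covered by exactly one element). -/
theorem stmt0 {L : Type*} [Lattice L] [Fintype L] {x y m : L}
    (hxy : x ⋖ y) (hm : m ⊓ y = x)
    (hmax : ∀ z : L, z ⊓ y = x → m ≤ z → z = m) :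
    ∃! w : L, m ⋖ w := by
  -- key: any w strictly above m satisfies y ≤ w
  have key : ∀ w : L, m < w → m ⊔ y ≤ w := by
    intro w hw
    have hxw : x ≤ w ⊓ y := hm ▸ inf_le_inf_right y hw.le
    have hne : w ⊓ y ≠ x := by
      intro h
      exact hw.ne' (hmax w h hw.le)
    have hlt : x < w ⊓ y := lt_of_le_of_ne hxw (Ne.symm hne)
    have hy : w ⊓ y = y := by
      rcases lt_or_eq_of_le (inf_le_right : w ⊓ y ≤ y) with h | h
      · exact absurd h (hxy.2 hlt)
      · exact h
    exact sup_le hw.le (hy ▸ inf_le_left)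
  have hmlt : m < m ⊔ y := by
    rcases lt_or_eq_of_le (le_sup_left : m ≤ m ⊔ y) with h | h
    · exact h
    · exfalso
      have hym : y ≤ m := le_sup_right.trans h.ge
      have : m ⊓ y = y := inf_eq_right.mpr hym
      exact hxy.ne (hm.symm.trans this)
  refine ⟨m ⊔ y, ⟨hmlt, fun c hc hc' => hc'.not_ge (key c hc)⟩, ?_⟩
  intro w hw
  exact ((key w hw.1).lt_or_eq.resolve_left (hw.2 hmlt)).symm
end

section
/- Let M ∈ GL_n(ℂ), and let P be an n×n permutation matrix and U₁, U₂ upper-triangular invertible matrices with M = U₁ P U₂. Then for all i, j, the rank of the submatrix M_{≥i, ≤j} (rows with index at least i, columns with index at most j) equals the rank of P_{≥i, ≤j}. -/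
open scoped Classical
open Finset

noncomputable section

/-- A linear extension of a finite poset, viewed as an order-preserving
bijection onto `Fin n`. -/
def IsLinExt {α : Type*} [PartialOrder α] {n : ℕ} (σ : α ≃ Fin n) : Prop :=
  ∀ a b : α, a ≤ b → σ a ≤ σ b

/-- The Cartan matrix of a finite poset with respect to a linear extension. -/
def cartan {α : Type*} [PartialOrder α] {n : ℕ} (σ : α ≃ Fin n) :
    Matrix (Fin n) (Fin n) ℂ :=
  fun i j => if σ.symm j ≤ σ.symm i then 1 else 0

/-- Upper-triangular matrices. -/
def IsUpperTri {n : ℕ} (U : Matrix (Fin n) (Fin n) ℂ) : Prop :=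
  ∀ i j : Fin n, j < i → U i j = 0

/-- The permutation matrix of `π`, with a `1` in row `i` and column `π i`. -/
def permMat {n : ℕ} (π : Equiv.Perm (Fin n)) : Matrix (Fin n) (Fin n) ℂ :=
  fun i j => if π i = j then 1 else 0

/-- `π` is the (unique) permutation indexing the Bruhat cell of `W`,
i.e. `W ∈ B (permMat π) B` with `B` the invertible upper-triangular matrices. -/
def IsBruhatPerm {n : ℕ} (W : Matrix (Fin n) (Fin n) ℂ) (π : Equiv.Perm (Fin n)) : Prop :=
  ∃ U₁ U₂ : Matrix (Fin n) (Fin n) ℂ,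
    IsUpperTri U₁ ∧ IsUpperTri U₂ ∧ IsUnit U₁.det ∧ IsUnit U₂.det ∧
      W = U₁ * permMat π * U₂

/-- Echelonmotion with respect to `σ`, given the Bruhat permutation `π` of the
Cartan matrix: `ech σ π x = y` iff `permMat π` has a `1` in row `σ y`, column `σ x`. -/
def ech {α : Type*} [PartialOrder α] {n : ℕ} (σ : α ≃ Fin n) (π : Equiv.Perm (Fin n)) :
    α → α := fun x => σ.symm (π⁻¹ (σ x))

end

/-- The rank of the lower-left submatrix with rows of index `≥ a` and columns
of index `< b`. -/
noncomputable def llrank {n : ℕ} (M : Matrix (Fin n) (Fin n) ℂ) (a b : ℕ) : ℕ :=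
  (M.submatrix (fun k : {k : Fin n // a ≤ (k : ℕ)} => (k : Fin n))
      (fun l : {l : Fin n // (l : ℕ) < b} => (l : Fin n))).rank

section myaux

open Matrix

lemma upperTri_diag_ne_zero {n : ℕ} {U : Matrix (Fin n) (Fin n) ℂ}
    (hU : IsUpperTri U) (hd : IsUnit U.det) : ∀ i, U i i ≠ 0 := by
  have ht : U.BlockTriangular id := fun i j h => hU i j h
  rw [Matrix.det_of_upperTriangular ht] at hd
  intro i hi
  exact hd.ne_zero (Finset.prod_eq_zero (Finset.mem_univ i) hi)

lemma isUnit_det_submatrix {n : ℕ} {U : Matrix (Fin n) (Fin n) ℂ}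
    (hU : IsUpperTri U) (hd : IsUnit U.det) (p : Fin n → Prop) [DecidablePred p] :
    IsUnit ((U.submatrix (fun k : {k : Fin n // p k} => (k : Fin n))
      (fun k : {k : Fin n // p k} => (k : Fin n))).det) := by
  have hdiag := upperTri_diag_ne_zero hU hd
  let e : Fin (Fintype.card {k : Fin n // p k}) ≃o {k : Fin n // p k} :=
    monoEquivOfFin _ rfl
  rw [← Matrix.det_submatrix_equiv_self e.toEquiv]
  have ht : (((U.submatrix (fun k : {k : Fin n // p k} => (k : Fin n))
      (fun k : {k : Fin n // p k} => (k : Fin n))).submatrix e.toEquiv e.toEquiv)).BlockTriangular id := by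
    intro i j hij
    exact hU _ _ (Subtype.coe_lt_coe.mpr (e.strictMono hij))
  rw [Matrix.det_of_upperTriangular ht]
  refine isUnit_iff_ne_zero.mpr (Finset.prod_ne_zero_iff.mpr fun i _ => ?_)
  exact hdiag _

lemma sum_eq_sum_subtype {n : ℕ} (p : Fin n → Prop) [DecidablePred p]
    (f : Fin n → ℂ) (hf : ∀ k, ¬ p k → f k = 0) :
    ∑ k, f k = ∑ k : {k : Fin n // p k}, f (k : Fin n) := by
  rw [← Finset.sum_subtype (Finset.univ.filter p) (fun x => by simp) f]
  exact (Finset.sum_subset (Finset.filter_subset _ _)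
    (fun x _ hx => hf x (by simpa using hx))).symm

end myaux

/-- If `M = U₁ P U₂` with `U₁, U₂` invertible upper-triangular and `P` a
permutation matrix, then all lower-left submatrices of `M` and `P` have the
same rank. -/
theorem stmt4 {n : ℕ} (M U₁ U₂ : Matrix (Fin n) (Fin n) ℂ)
    (π : Equiv.Perm (Fin n))
    (hM : IsUnit M.det)
    (hU₁ : IsUpperTri U₁) (hU₂ : IsUpperTri U₂)
    (hU₁d : IsUnit U₁.det) (hU₂d : IsUnit U₂.det)
    (hfac : M = U₁ * permMat π * U₂) :
    ∀ a b : ℕ, llrank M a b = llrank (permMat π) a b := by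
  intro a b
  set pa : Fin n → Prop := fun k => a ≤ (k : ℕ) with hpa
  set pb : Fin n → Prop := fun l => (l : ℕ) < b with hpb
  set ia : {k : Fin n // pa k} → Fin n := fun k => (k : Fin n) with hia
  set ib : {l : Fin n // pb l} → Fin n := fun l => (l : Fin n) with hib
  set P := permMat π with hP
  set N := P * U₂ with hN
  have step1 : M.submatrix ia ib = (U₁.submatrix ia ia) * (N.submatrix ia ib) := by
    ext i j
    rw [Matrix.mul_apply, Matrix.submatrix_apply, hfac, Matrix.mul_assoc, ← hN,
      Matrix.mul_apply]
    refine sum_eq_sum_subtype pa _ fun k hk => ?_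
    have : (k : ℕ) < (i : ℕ) := lt_of_lt_of_le (Nat.lt_of_not_le hk) i.2
    rw [hU₁ _ _ this, zero_mul]
  have step2 : N.submatrix ia ib = (P.submatrix ia ib) * (U₂.submatrix ib ib) := by
    ext i j
    rw [Matrix.mul_apply, Matrix.submatrix_apply, hN, Matrix.mul_apply]
    refine sum_eq_sum_subtype pb _ fun l hl => ?_
    have : ((j : Fin n) : ℕ) < (l : ℕ) := lt_of_lt_of_le j.2 (Nat.le_of_not_lt hl)
    rw [hU₂ _ _ this, mul_zero]
  have hA : IsUnit ((U₁.submatrix ia ia).det) := isUnit_det_submatrix hU₁ hU₁d pa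
  have hC : IsUnit ((U₂.submatrix ib ib).det) := isUnit_det_submatrix hU₂ hU₂d pb
  unfold llrank
  calc (M.submatrix ia ib).rank
      = ((U₁.submatrix ia ia) * ((P.submatrix ia ib) * (U₂.submatrix ib ib))).rank := by
        rw [step1, step2]
    _ = ((P.submatrix ia ib) * (U₂.submatrix ib ib)).rank :=
        Matrix.rank_mul_eq_right_of_isUnit_det _ _ hA
    _ = (P.submatrix ia ib).rank :=
        Matrix.rank_mul_eq_left_of_isUnit_det _ _ hC
end

section
/- Let P be an n×n permutation matrix. Then for all i, j ∈ {1,…,n}, we have P_{i,j} = 1 if and only if rank(P_{≥i+1,≤j−1}) = rank(P_{≥i+1,≤j}) = rank(P_{≥i,≤j−1}) = rank(P_{≥i,≤j}) − 1, where P_{≥a,≤b} denotes the submatrix of rows with index at least a and columns with index at most b. -/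
/-!
Over any field, a partial permutation matrix `A` satisfies `A * Aᵀ * A = A`, and `A * Aᵀ` is a
diagonal `0`/`1` matrix, so the rank of `A` is its number of ones. Every lower-left submatrix of a
permutation matrix is a partial permutation matrix, so `llrank` counts the ones of `P` in a
south-west corner, and moving the corner by one row (or column) changes the count by the one entry
of `P` on that row (or column). The first and third conditions then say that the one of column `j`
lies in row `i`, and the second is automatic in that case.
-/

open scoped Classical
open Finset

open Matrix

namespace PEquiv

variable {α β : Type*}

theorem self_trans_symm_trans (f : α ≃. β) : (f.trans f.symm).trans f = f := by
  ext a b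
  rw [self_trans_symm]
  simp only [PEquiv.trans, ofSet]
  aesop

theorem toMatrix_ofSet {K : Type*} [DecidableEq α] [Zero K] [One K] (s : Set α)
    [DecidablePred (· ∈ s)] :
    (ofSet s).toMatrix = diagonal fun a => if a ∈ s then (1 : K) else 0 := by
  ext a b
  simp only [toMatrix_apply, Option.mem_def, ofSet_eq_some_iff, diagonal_apply]
  aesop

theorem rank_toMatrix {m n K : Type*} [Fintype m] [Fintype n] [DecidableEq m] [DecidableEq n]
    [Field K] (f : m ≃. n) :
    (f.toMatrix : Matrix m n K).rank = Fintype.card {a // (f a).isSome} := by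
  have hdiag : ((f.toMatrix : Matrix m n K) * (f.symm.toMatrix : Matrix n m K)).rank
      = Fintype.card {a // (f a).isSome} := by
    rw [← toMatrix_trans, self_trans_symm, toMatrix_ofSet, rank_diagonal]
    simp only [Set.mem_ofPred_eq, ne_eq, ite_eq_right_iff, one_ne_zero, imp_false, not_not]
  refine le_antisymm ?_ (hdiag ▸ rank_mul_le_left _ _)
  calc (f.toMatrix : Matrix m n K).rank
    _ = ((f.toMatrix : Matrix m n K) * (f.symm.toMatrix : Matrix n m K)
          * (f.toMatrix : Matrix m n K)).rank := by
      rw [← toMatrix_trans, ← toMatrix_trans, self_trans_symm_trans]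
    _ ≤ _ := rank_mul_le_left _ _
    _ = _ := hdiag

def subtypeVal (p : α → Prop) [DecidablePred p] : {a // p a} ≃. α where
  toFun a := some a.1
  invFun b := if h : p b then some ⟨b, h⟩ else none
  inv a b := by split_ifs with h <;> grind

@[simp]
theorem subtypeVal_apply (p : α → Prop) [DecidablePred p] (a : {a // p a}) :
    subtypeVal p a = some a.1 := rfl

@[simp]
theorem subtypeVal_symm_apply (p : α → Prop) [DecidablePred p] (b : α) :
    (subtypeVal p).symm b = if h : p b then some ⟨b, h⟩ else none := rfl

theorem toMatrix_submatrix_subtypeVal {K : Type*} [DecidableEq β] [Zero K] [One K] (f : α ≃. β)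
    (p : α → Prop) (q : β → Prop) [DecidablePred p] [DecidablePred q] :
    (f.toMatrix : Matrix α β K).submatrix Subtype.val Subtype.val
      = ((subtypeVal p).trans (f.trans (subtypeVal q).symm)).toMatrix := by
  ext a b
  simp [PEquiv.trans, Option.bind_eq_some_iff, Subtype.ext_iff, b.2]

end PEquiv

theorem permMat_eq_toMatrix {n : ℕ} (π : Equiv.Perm (Fin n)) :
    permMat π = π.toPEquiv.toMatrix := by
  ext i j
  simp [permMat]

theorem llrank_permMat {n : ℕ} (π : Equiv.Perm (Fin n)) (a b : ℕ) :
    llrank (permMat π) a b = #{k : Fin n | a ≤ (k : ℕ) ∧ (π k : ℕ) < b} := by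
  rw [llrank, permMat_eq_toMatrix, PEquiv.toMatrix_submatrix_subtypeVal, PEquiv.rank_toMatrix]
  simp only [PEquiv.trans, PEquiv.subtypeVal_apply, Equiv.toPEquiv_apply, Option.bind_some,
    PEquiv.subtypeVal_symm_apply, PEquiv.symm_symm, PEquiv.coe_mk, Option.isSome_dite]
  rw [← Fintype.card_subtype]
  exact Fintype.card_congr (Equiv.subtypeSubtypeEquivSubtypeInter (fun k : Fin n => a ≤ (k : ℕ))
    (fun k => (π k : ℕ) < b))

theorem Finset.card_eq_card_erase_add_ite {α : Type*} [DecidableEq α] (s : Finset α) (a : α) :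
    #s = #(s.erase a) + if a ∈ s then 1 else 0 := by
  split_ifs with h
  · exact (card_erase_add_one h).symm
  · rw [erase_eq_of_notMem h, add_zero]

theorem llrank_permMat_succ_right {n : ℕ} (π : Equiv.Perm (Fin n)) (a : ℕ) (j : Fin n) :
    llrank (permMat π) a (j + 1)
      = llrank (permMat π) a j + if a ≤ ((π⁻¹ j : Fin n) : ℕ) then 1 else 0 := by
  rw [llrank_permMat, llrank_permMat, card_eq_card_erase_add_ite _ (π⁻¹ j)]
  congr 2
  · ext k
    rcases eq_or_ne k (π⁻¹ j) with rfl | hk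
    · simp
    · have : (π k : ℕ) ≠ j :=
        Fin.val_injective.ne fun e => hk (Equiv.Perm.eq_inv_iff_eq.mpr e)
      simp only [mem_erase, mem_filter, mem_univ, true_and, hk, ne_eq, not_false_eq_true]
      omega
  · simp

theorem llrank_permMat_succ_left {n : ℕ} (π : Equiv.Perm (Fin n)) (i : Fin n) (b : ℕ) :
    llrank (permMat π) i b
      = llrank (permMat π) (i + 1) b + if ((π i : Fin n) : ℕ) < b then 1 else 0 := by
  rw [llrank_permMat, llrank_permMat, card_eq_card_erase_add_ite _ i]
  congr 2
  · ext k
    rcases eq_or_ne k i with rfl | hk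
    · simp
    · have : (k : ℕ) ≠ i := Fin.val_injective.ne hk
      simp only [mem_erase, mem_filter, mem_univ, true_and, hk, ne_eq, not_false_eq_true]
      omega
  · simp

theorem permMat_apply_eq_one_iff {n : ℕ} (π : Equiv.Perm (Fin n)) (i j : Fin n) :
    permMat π i j = 1 ↔ π i = j := by
  simp [permMat]

/-- For a permutation matrix `P`, the entry `P i j` equals 1 iff
rank(P_{>i,<j}) = rank(P_{>i,≤j}) = rank(P_{≥i,<j}) = rank(P_{≥i,≤j}) − 1. -/
theorem stmt5 {n : ℕ} (π : Equiv.Perm (Fin n)) (i j : Fin n) :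
    permMat π i j = 1 ↔
      (llrank (permMat π) ((i : ℕ) + 1) (j : ℕ)
          = llrank (permMat π) ((i : ℕ) + 1) ((j : ℕ) + 1) ∧
       llrank (permMat π) ((i : ℕ) + 1) ((j : ℕ) + 1)
          = llrank (permMat π) (i : ℕ) (j : ℕ) ∧
       llrank (permMat π) (i : ℕ) (j : ℕ) + 1
          = llrank (permMat π) (i : ℕ) ((j : ℕ) + 1)) := by
  have hentry : permMat π i j = 1 ↔ ((π⁻¹ j : Fin n) : ℕ) = i := by
    rw [permMat_apply_eq_one_iff, Fin.val_inj, Equiv.Perm.inv_eq_iff_eq, eq_comm]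
  have hdiag : ((π⁻¹ j : Fin n) : ℕ) = i → ¬ (π i : ℕ) < j := by
    rw [← hentry, permMat_apply_eq_one_iff]
    rintro rfl
    exact lt_irrefl _
  rw [hentry, llrank_permMat_succ_right π (i + 1) j, llrank_permMat_succ_right π i j,
    llrank_permMat_succ_left π i j]
  split_ifs <;> omega
end

section
/- Let R be a finite Eulerian poset and σ any linear extension of R. Then the echelonmotion map Ech_σ : R → R is an involution, i.e., Ech_σ ∘ Ech_σ is the identity. -/
open scoped Classical
open Finset

/-!
If `W = cartan σ` and `D` is the diagonal matrix of signs `(-1) ^ rk`, then on an Eulerian poset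
the Möbius function is `(-1) ^ (rk b - rk a)`, so Möbius inversion reads `W⁻¹ = D W D`.
Writing `W = U₁ P U₂` and conjugating by `U₁` gives `P⁻¹ = A P A` with `A = U₂ D U₁` invertible
upper triangular, so `P⁻¹` lies in the Bruhat cell of `P`. Bruhat cells are told apart by the
ranks of lower-left corners, which for a permutation matrix count the ones in the corner;
hence `P⁻¹ = P`, i.e. echelonmotion is an involution.
-/

namespace Matrix

variable {ι R : Type*} [LinearOrder ι]

def lowerLeft (M : Matrix ι ι R) (i j : ι) : Matrix {k // i ≤ k} {l // l ≤ j} R :=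
  M.submatrix Subtype.val Subtype.val

lemma IsUpperTriangular.submatrix_val [Zero R] {A : Matrix ι ι R} (hA : A.IsUpperTriangular)
    (p : ι → Prop) : (A.submatrix (Subtype.val : Subtype p → ι) Subtype.val).IsUpperTriangular :=
  fun _ _ h => hA h

lemma permMatrix_apply [Zero R] [One R] (π : Equiv.Perm ι) (a b : ι) :
    π.permMatrix R a b = if π a = b then 1 else 0 := by
  simp [PEquiv.toMatrix_apply, Equiv.toPEquiv_apply]

variable [Fintype ι]

section CommRing

variable [CommRing R] [IsDomain R]

lemma rank_lowerLeft_mul_eq_right_of_isUpperTriangular {A : Matrix ι ι R}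
    (hA : A.IsUpperTriangular) (hd : ∀ k, A k k ≠ 0) (M : Matrix ι ι R) (i j : ι) :
    ((A * M).lowerLeft i j).rank = (M.lowerLeft i j).rank := by
  rw [← rank_mul_eq_right_of_isUpperTriangular (A.submatrix Subtype.val Subtype.val)
    (M.lowerLeft i j) (hA.submatrix_val _) fun k => hd k]
  congr 1
  ext a b
  simp only [lowerLeft, submatrix_apply, mul_apply]
  rw [← Finset.sum_subtype (univ.filter (i ≤ ·)) (by simp) (fun k => A a k * M k b),
    Finset.sum_filter_of_ne]
  intro k _ hk
  by_contra hik
  exact hk (by rw [hA (lt_of_lt_of_le (not_le.mp hik) a.2), zero_mul])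

lemma rank_lowerLeft_mul_eq_left_of_isUpperTriangular {C : Matrix ι ι R}
    (hC : C.IsUpperTriangular) (hd : ∀ k, C k k ≠ 0) (M : Matrix ι ι R) (i j : ι) :
    ((M * C).lowerLeft i j).rank = (M.lowerLeft i j).rank := by
  have hdet : (C.submatrix (Subtype.val : {l // l ≤ j} → ι) Subtype.val).det ≠ 0 := by
    rw [det_of_isUpperTriangular (hC.submatrix_val _)]
    exact Finset.prod_ne_zero_iff.mpr fun k _ => hd k
  rw [← rank_mul_eq_left_of_det_ne_zero _ (M.lowerLeft i j) hdet]
  congr 1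
  ext a b
  simp only [lowerLeft, submatrix_apply, mul_apply]
  rw [← Finset.sum_subtype (univ.filter (· ≤ j)) (by simp) (fun k => M a k * C k b),
    Finset.sum_filter_of_ne]
  intro k _ hk
  by_contra hkj
  exact hk (by rw [hC (lt_of_le_of_lt b.2 (not_le.mp hkj)), mul_zero])

end CommRing

/-- `M Mᵀ` is the diagonal projection `D` onto the rows of the corner `M` that contain a one,
and `D M = M`; hence `rank M = rank (M Mᵀ) = rank D`. -/
lemma rank_lowerLeft_permMatrix [Field R] (π : Equiv.Perm ι) (i j : ι) :
    ((π.permMatrix R).lowerLeft i j).rank = #{k | i ≤ k ∧ π k ≤ j} := by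
  set M := (π.permMatrix R).lowerLeft i j
  set D : Matrix {k // i ≤ k} {k // i ≤ k} R := diagonal fun a => if π a ≤ j then 1 else 0
  have hMMt : M * Mᵀ = D := by
    ext a b
    simp only [M, D, lowerLeft, submatrix_apply, transpose_apply, permMatrix_apply, mul_apply,
      diagonal_apply, Subtype.ext_iff]
    rcases le_or_gt (π a) j with h | h
    · rw [Finset.sum_eq_single ⟨π a, h⟩
        (fun x _ hx => by simp [Subtype.ext_iff] at hx; simp [Ne.symm hx]) (by simp)]
      simp [h, π.injective.eq_iff, eq_comm]
    · rw [Finset.sum_eq_zero fun x _ => by simp [show π a ≠ x from fun hx => h.not_ge (hx ▸ x.2)]]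
      simp [h.not_ge]
  have hDM : D * M = M := by
    ext a b
    simp only [M, D, lowerLeft, diagonal_mul, submatrix_apply, permMatrix_apply]
    by_cases h : π a = b
    · simp [h, b.2]
    · simp [h]
  have hrank : M.rank = D.rank := by
    refine le_antisymm ?_ (hMMt ▸ rank_mul_le_left M Mᵀ)
    calc M.rank = (D * M).rank := by rw [hDM]
      _ ≤ D.rank := rank_mul_le_left D M
  rw [hrank, rank_diagonal]
  simp only [ne_eq, ite_eq_right_iff, one_ne_zero, imp_false, not_not]
  rw [Fintype.card_congr (Equiv.subtypeSubtypeEquivSubtypeInter (i ≤ ·) (π · ≤ j)),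
    Fintype.card_subtype]

end Matrix

section CornerCount

variable {ι β : Type*} [Fintype ι] [LinearOrder ι]

lemma card_filter_le_and (p : ι → Prop) [DecidablePred p] (i : ι) :
    #{k | i ≤ k ∧ p k} = #{k | i < k ∧ p k} + if p i then 1 else 0 := by
  split_ifs with hi
  · rw [← card_insert_of_notMem (s := {k | i < k ∧ p k}) (a := i) (by simp)]
    congr 1
    ext k
    simp only [mem_filter, mem_univ, true_and, mem_insert, le_iff_lt_or_eq]
    grind
  · congr 1
    ext k
    simp only [mem_filter, mem_univ, true_and, le_iff_lt_or_eq]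
    grind

lemma eq_of_card_filter_le_eq [LinearOrder β] {f g : ι → β}
    (h : ∀ i j, #{k | i ≤ k ∧ f k ≤ j} = #{k | i ≤ k ∧ g k ≤ j}) : f = g := by
  funext i
  induction i using WellFoundedGT.induction with
  | _ i ih =>
    refine eq_of_forall_ge_iff fun j => ?_
    have hgt : #{k | i < k ∧ f k ≤ j} = #{k | i < k ∧ g k ≤ j} := by
      congr 1
      exact filter_congr fun k _ => and_congr_right fun hk => by rw [ih k hk]
    have hcard := h i j
    rw [card_filter_le_and, card_filter_le_and, hgt] at hcard
    by_cases hf : f i ≤ j <;> by_cases hg : g i ≤ j <;> simp [hf, hg] at hcard ⊢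

end CornerCount

open Matrix

section Bruhat

variable {n : ℕ}

lemma isUpperTri_iff {U : Matrix (Fin n) (Fin n) ℂ} : IsUpperTri U ↔ U.IsUpperTriangular :=
  ⟨fun h _ _ hij => h _ _ hij, fun h _ _ hij => h hij⟩

lemma IsUpperTri.diag_ne_zero {U : Matrix (Fin n) (Fin n) ℂ} (hU : IsUpperTri U)
    (hdet : IsUnit U.det) (k : Fin n) : U k k ≠ 0 := by
  rw [det_of_isUpperTriangular (isUpperTri_iff.mp hU), isUnit_iff_ne_zero] at hdet
  exact Finset.prod_ne_zero_iff.mp hdet k (mem_univ k)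

lemma permMat_eq_permMatrix (π : Equiv.Perm (Fin n)) : permMat π = π.permMatrix ℂ := by
  ext i j
  rw [permMat, permMatrix_apply]

lemma IsBruhatPerm.rank_lowerLeft {W : Matrix (Fin n) (Fin n) ℂ} {π : Equiv.Perm (Fin n)}
    (hW : IsBruhatPerm W π) (i j : Fin n) :
    (W.lowerLeft i j).rank = #{k | i ≤ k ∧ π k ≤ j} := by
  obtain ⟨U₁, U₂, hU₁, hU₂, hd₁, hd₂, rfl⟩ := hW
  rw [rank_lowerLeft_mul_eq_left_of_isUpperTriangular (isUpperTri_iff.mp hU₂)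
      (hU₂.diag_ne_zero hd₂),
    rank_lowerLeft_mul_eq_right_of_isUpperTriangular (isUpperTri_iff.mp hU₁)
      (hU₁.diag_ne_zero hd₁),
    permMat_eq_permMatrix, rank_lowerLeft_permMatrix]

lemma IsBruhatPerm.unique {W : Matrix (Fin n) (Fin n) ℂ} {π ρ : Equiv.Perm (Fin n)}
    (hπ : IsBruhatPerm W π) (hρ : IsBruhatPerm W ρ) : π = ρ :=
  DFunLike.coe_injective <| eq_of_card_filter_le_eq fun i j => by
    rw [← hπ.rank_lowerLeft, ← hρ.rank_lowerLeft]

lemma isBruhatPerm_permMat (π : Equiv.Perm (Fin n)) : IsBruhatPerm (permMat π) π := by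
  have h1 : IsUpperTri (1 : Matrix (Fin n) (Fin n) ℂ) := isUpperTri_iff.mpr blockTriangular_one
  exact ⟨1, 1, h1, h1, by simp, by simp, by simp⟩

lemma IsBruhatPerm.inv_eq_self {W D : Matrix (Fin n) (Fin n) ℂ} {π : Equiv.Perm (Fin n)}
    (hW : IsBruhatPerm W π) (hD : IsUpperTri D) (hDdet : IsUnit D.det)
    (hinv : W * (D * W * D) = 1) : π⁻¹ = π := by
  obtain ⟨U₁, U₂, hU₁, hU₂, hd₁, hd₂, rfl⟩ := hW
  set A := U₂ * D * U₁
  have hA : IsUpperTri A := isUpperTri_iff.mpr <|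
    ((isUpperTri_iff.mp hU₂).mul (isUpperTri_iff.mp hD)).mul (isUpperTri_iff.mp hU₁)
  have hAdet : IsUnit A.det := by simpa only [A, det_mul] using (hd₂.mul hDdet).mul hd₁
  have hright : permMat π * (A * permMat π * A) = 1 := by
    have : U₁ * (permMat π * U₂ * D * U₁ * permMat π * U₂ * D) = 1 := by
      simpa only [Matrix.mul_assoc] using hinv
    simpa only [A, Matrix.mul_assoc] using mul_eq_one_comm.mp this
  have hleft : permMat π⁻¹ * permMat π = 1 := by
    rw [permMat_eq_permMatrix, permMat_eq_permMatrix, ← permMatrix_mul, mul_inv_cancel,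
      permMatrix_one]
  have hcell : IsBruhatPerm (permMat π⁻¹) π :=
    ⟨A, A, hA, hA, hAdet, hAdet, left_inv_eq_right_inv hleft hright⟩
  exact (isBruhatPerm_permMat π⁻¹).unique hcell

end Bruhat

noncomputable section Eulerian

variable {α : Type*} {n : ℕ}

def signMatrix (σ : α ≃ Fin n) (rk : α → ℤ) : Matrix (Fin n) (Fin n) ℂ :=
  diagonal fun k => (-1) ^ rk (σ.symm k)

lemma isUpperTri_signMatrix (σ : α ≃ Fin n) (rk : α → ℤ) : IsUpperTri (signMatrix σ rk) :=
  isUpperTri_iff.mpr (blockTriangular_diagonal _)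

lemma isUnit_det_signMatrix (σ : α ≃ Fin n) (rk : α → ℤ) : IsUnit (signMatrix σ rk).det := by
  rw [signMatrix, det_diagonal, isUnit_iff_ne_zero, Finset.prod_ne_zero_iff]
  exact fun k _ => zpow_ne_zero _ (by norm_num)

variable [PartialOrder α]

def mobiusMatrix (σ : α ≃ Fin n) (μ : α → α → ℂ) : Matrix (Fin n) (Fin n) ℂ :=
  of fun i j => if σ.symm j ≤ σ.symm i then μ (σ.symm j) (σ.symm i) else 0

lemma cartan_mul_mobiusMatrix [Fintype α] (σ : α ≃ Fin n) {μ : α → α → ℂ}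
    (hμ : ∀ a b : α, a ≤ b →
      ∑ z ∈ Finset.univ.filter (fun z : α => a ≤ z ∧ z ≤ b), μ a z = if a = b then 1 else 0) :
    cartan σ * mobiusMatrix σ μ = 1 := by
  ext i j
  set a := σ.symm i
  set b := σ.symm j
  have hsum : ∑ z, (if z ≤ a then (1 : ℂ) else 0) * (if b ≤ z then μ b z else 0)
      = if b = a then 1 else 0 := by
    simp only [boole_mul, ← ite_and, ← Finset.sum_filter, and_comm (a := _ ≤ a)]
    by_cases hba : b ≤ a
    · exact hμ b a hba
    · rw [if_neg (fun h => hba h.le), Finset.sum_eq_zero]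
      intro z hz
      exact absurd ((mem_filter.mp hz).2.1.trans (mem_filter.mp hz).2.2) hba
  simpa [cartan, mobiusMatrix, mul_apply, one_apply, a, b, eq_comm] using
    (Equiv.sum_comp σ.symm _).trans hsum

lemma neg_one_zpow_mul_neg_one_zpow (p q : ℤ) : (-1 : ℂ) ^ p * (-1) ^ q = (-1) ^ (p - q) := by
  rw [← zpow_add₀ (by norm_num), show p + q = p - q + 2 * q by ring, zpow_add₀ (by norm_num),
    _root_.zpow_mul]
  norm_num

lemma signMatrix_mul_cartan_mul_signMatrix (σ : α ≃ Fin n) {rk : α → ℤ} {μ : α → α → ℂ}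
    (hEuler : ∀ a b : α, a ≤ b → μ a b = (-1 : ℂ) ^ (rk b - rk a)) :
    signMatrix σ rk * cartan σ * signMatrix σ rk = mobiusMatrix σ μ := by
  ext i j
  simp only [signMatrix, cartan, mobiusMatrix, diagonal_mul, mul_diagonal, of_apply]
  split_ifs with h
  · rw [mul_one, neg_one_zpow_mul_neg_one_zpow, hEuler _ _ h]
  · rw [mul_zero, zero_mul]

end Eulerian

theorem stmt8_general {α : Type*} [PartialOrder α] [Fintype α] {n : ℕ}
    (σ : α ≃ Fin n)
    (rk : α → ℤ)
    (μ : α → α → ℂ)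
    (hμ : ∀ a b : α, a ≤ b →
      ∑ z ∈ Finset.univ.filter (fun z : α => a ≤ z ∧ z ≤ b), μ a z
        = if a = b then 1 else 0)
    (hEuler : ∀ a b : α, a ≤ b → μ a b = (-1 : ℂ) ^ (rk b - rk a))
    (π : Equiv.Perm (Fin n)) (hπ : IsBruhatPerm (cartan σ) π) :
    ∀ x : α, ech σ π (ech σ π x) = x := by
  have hcartan_inv : cartan σ * (signMatrix σ rk * cartan σ * signMatrix σ rk) = 1 := by
    rw [signMatrix_mul_cartan_mul_signMatrix σ hEuler, cartan_mul_mobiusMatrix σ hμ]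
  have hπ_inv : π⁻¹ = π :=
    hπ.inv_eq_self (isUpperTri_signMatrix σ rk) (isUnit_det_signMatrix σ rk) hcartan_inv
  intro x
  calc σ.symm (π⁻¹ (σ (σ.symm (π⁻¹ (σ x))))) = σ.symm (π (π⁻¹ (σ x))) := by
        rw [Equiv.apply_symm_apply, hπ_inv]
    _ = x := by simp

/-- Echelonmotion on a finite Eulerian poset, with respect to any linear
extension, is an involution. -/
theorem stmt8 {α : Type*} [PartialOrder α] [Fintype α] {n : ℕ}
    (σ : α ≃ Fin n) (hσ : IsLinExt σ)
    (rk : α → ℤ) (hrk : ∀ a b : α, a ⋖ b → rk b = rk a + 1)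
    (μ : α → α → ℂ)
    (hμ0 : ∀ a b : α, ¬ a ≤ b → μ a b = 0)
    (hμ : ∀ a b : α, a ≤ b →
      ∑ z ∈ Finset.univ.filter (fun z : α => a ≤ z ∧ z ≤ b), μ a z
        = if a = b then 1 else 0)
    (hEuler : ∀ a b : α, a ≤ b → μ a b = (-1 : ℂ) ^ (rk b - rk a))
    (π : Equiv.Perm (Fin n)) (hπ : IsBruhatPerm (cartan σ) π) :
    ∀ x : α, ech σ π (ech σ π x) = x :=
  stmt8_general σ rk μ hμ hEuler π hπ
end

section
/- Let R be a finite poset of size n, let x be a minimal element and y a maximal element of R with x ≤ y, and let σ be a linear extension of R with σ(x) = 1 and σ(y) = n. Then Ech_σ(x) = y. -/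
open scoped Classical
open Finset

/- In the Bruhat decomposition `W = U₁ P U₂`, the corner entry of `W` in the last row and first
column only sees the corner entry of `P`, because `U₁` has nothing left of its last diagonal entry
in the last row and `U₂` nothing below its first diagonal entry in the first column. With `σ x`
first and `σ y` last, that corner entry of the Cartan matrix is `1` exactly because `x ≤ y`, so
`P` has its `1` in row `σ y`, column `σ x`. -/

theorem IsUpperTri.mul_mul_apply_of_isTop_of_isBot {n : ℕ} {U₁ U₂ : Matrix (Fin n) (Fin n) ℂ}
    (h₁ : IsUpperTri U₁) (h₂ : IsUpperTri U₂) (M : Matrix (Fin n) (Fin n) ℂ) {i j : Fin n}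
    (hi : IsTop i) (hj : IsBot j) :
    (U₁ * M * U₂) i j = U₁ i i * M i j * U₂ j j := by
  have hrow : ∀ k ≠ i, U₁ i k = 0 := fun k hk => h₁ i k ((hi k).lt_of_ne hk)
  have hcol : ∀ k ≠ j, U₂ k j = 0 := fun k hk => h₂ k j ((hj k).lt_of_ne' hk)
  rw [Matrix.mul_apply, Finset.sum_eq_single j (fun k _ hk => by rw [hcol k hk, mul_zero])
    (by simp), Matrix.mul_apply, Finset.sum_eq_single i (fun k _ hk => by rw [hrow k hk, zero_mul])
    (by simp)]

theorem permMat_apply_ne_zero {n : ℕ} {π : Equiv.Perm (Fin n)} {i j : Fin n}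
    (h : permMat π i j ≠ 0) : π i = j := by
  by_contra hne
  exact h (if_neg hne)

theorem IsBruhatPerm.apply_eq_of_isTop_of_isBot {n : ℕ} {W : Matrix (Fin n) (Fin n) ℂ}
    {π : Equiv.Perm (Fin n)} (hπ : IsBruhatPerm W π) {i j : Fin n} (hi : IsTop i) (hj : IsBot j)
    (hW : W i j ≠ 0) : π i = j := by
  obtain ⟨U₁, U₂, h₁, h₂, -, -, rfl⟩ := hπ
  rw [h₁.mul_mul_apply_of_isTop_of_isBot h₂ _ hi hj] at hW
  exact permMat_apply_ne_zero (right_ne_zero_of_mul (left_ne_zero_of_mul hW))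

theorem cartan_apply_apply {α : Type*} [PartialOrder α] {n : ℕ} (σ : α ≃ Fin n) (a b : α) :
    cartan σ (σ a) (σ b) = if b ≤ a then 1 else 0 := by
  simp only [cartan, Equiv.symm_apply_apply]

theorem stmt10_general {α : Type*} [PartialOrder α] [Fintype α] {x y : α}
    (hxy : x ≤ y)
    (σ : α ≃ Fin (Fintype.card α))
    (hσx : (σ x : ℕ) = 0) (hσy : (σ y : ℕ) = Fintype.card α - 1)
    (π : Equiv.Perm (Fin (Fintype.card α))) (hπ : IsBruhatPerm (cartan σ) π) :
    ech σ π x = y := by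
  have hy : IsTop (σ y) := fun k => by rw [Fin.le_def, hσy]; omega
  have hx : IsBot (σ x) := fun k => by rw [Fin.le_def, hσx]; omega
  have hW : cartan σ (σ y) (σ x) ≠ 0 := by simp [cartan_apply_apply, hxy]
  have hπy : π (σ y) = σ x := hπ.apply_eq_of_isTop_of_isBot hy hx hW
  rw [ech, ← hπy, Equiv.Perm.inv_def, Equiv.symm_apply_apply, Equiv.symm_apply_apply]

/-- If `x` is minimal, `y` is maximal, `x ≤ y`, and `σ` is a linear extension
putting `x` first and `y` last, then `Ech_σ(x) = y`. -/
theorem stmt10 {α : Type*} [PartialOrder α] [Fintype α] {x y : α}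
    (hx : IsMin x) (hy : IsMax y) (hxy : x ≤ y)
    (σ : α ≃ Fin (Fintype.card α)) (hσ : IsLinExt σ)
    (hσx : (σ x : ℕ) = 0) (hσy : (σ y : ℕ) = Fintype.card α - 1)
    (π : Equiv.Perm (Fin (Fintype.card α))) (hπ : IsBruhatPerm (cartan σ) π) :
    ech σ π x = y :=
  stmt10_general hxy σ hσx hσy π hπ
end

section
/- Every echelon-independent connected finite poset is bounded, i.e., has a minimum element and a maximum element. -/
open scoped Classical
open Finset

/-- A finite poset is connected if any two elements are joined by a path in the
Hasse diagram (a zigzag of covering relations). -/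
def PosetConnected (α : Type*) [PartialOrder α] : Prop :=
  ∀ a b : α, Relation.ReflTransGen (fun x y : α => x ⋖ y ∨ y ⋖ x) a b

/-- A finite poset is echelon-independent if echelonmotion is the same map for
all linear extensions. -/
def EchIndep (α : Type*) [PartialOrder α] [Fintype α] : Prop :=
  ∀ (σ σ' : α ≃ Fin (Fintype.card α)) (π π' : Equiv.Perm (Fin (Fintype.card α))),
    IsLinExt σ → IsLinExt σ' →
      IsBruhatPerm (cartan σ) π → IsBruhatPerm (cartan σ') π' →
        ech σ π = ech σ' π'

/-!
In `W = U₁ P U₂` with `U₁, U₂` upper triangular, column `0` of `W` is `U₂ 0 0` times column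
`π⁻¹ 0` of `U₁`, so `π⁻¹ 0` is the row of the lowest nonzero entry of column `0`. For a
Cartan matrix this says that echelonmotion sends the first element of the linear extension to
the last element above it. If `m` is minimal, `M` maximal and `m < M`, some linear extension
starts with `m` and ends with `M`; by echelon-independence a single injective map `Ech`
therefore sends each such `m` to each such `M`. So each element lies below exactly one maximal
element and above exactly one minimal element, these are constant along the covering relations,
and connectedness makes them a maximum and a minimum.

The Bruhat cell of an invertible matrix is found by elimination: column by column, from left to
right, clear the column above its lowest nonzero entry and the row of that entry to its right.
-/

open Matrix

section Bruhat

variable {n : ℕ}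

lemma IsUpperTri.isUpperTriangular {U : Matrix (Fin n) (Fin n) ℂ} (h : IsUpperTri U) :
    U.IsUpperTriangular :=
  fun i j hij => h i j hij

lemma IsUpperTri.det_eq_prod_diag {U : Matrix (Fin n) (Fin n) ℂ} (h : IsUpperTri U) :
    U.det = ∏ i, U i i :=
  det_of_isUpperTriangular h.isUpperTriangular

def IsBorel (U : Matrix (Fin n) (Fin n) ℂ) : Prop :=
  IsUpperTri U ∧ IsUnit U.det

lemma isBorel_one : IsBorel (1 : Matrix (Fin n) (Fin n) ℂ) :=
  ⟨fun _ _ hij => one_apply_ne hij.ne', by simp⟩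

lemma IsBorel.mul {U V : Matrix (Fin n) (Fin n) ℂ} (hU : IsBorel U) (hV : IsBorel V) :
    IsBorel (U * V) :=
  ⟨fun _ _ hij => (hU.1.isUpperTriangular.mul hV.1.isUpperTriangular) hij,
    by rw [det_mul]; exact hU.2.mul hV.2⟩

lemma IsBorel.inv {U : Matrix (Fin n) (Fin n) ℂ} (hU : IsBorel U) : IsBorel U⁻¹ := by
  let := U.invertibleOfIsUnitDet hU.2
  exact ⟨fun _ _ hij => blockTriangular_inv_of_blockTriangular hU.1.isUpperTriangular hij,
    isUnit_nonsing_inv_det U hU.2⟩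

lemma isBorel_diagonal {d : Fin n → ℂ} (hd : ∀ i, d i ≠ 0) : IsBorel (diagonal d) :=
  ⟨fun _ _ hij => diagonal_apply_ne d hij.ne',
    by simpa [det_diagonal, isUnit_iff_ne_zero, Finset.prod_ne_zero_iff] using hd⟩

lemma isBorel_one_sub_vecMulVec {u v : Fin n → ℂ} (h : ∀ i j, j ≤ i → u i * v j = 0) :
    IsBorel (1 - vecMulVec u v) := by
  have hU : IsUpperTri (1 - vecMulVec u v) := fun i j hij => by
    simp [one_apply_ne hij.ne', vecMulVec_apply, h i j hij.le]
  refine ⟨hU, ?_⟩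
  rw [hU.det_eq_prod_diag]
  simp [vecMulVec_apply, h _ _ le_rfl]

lemma exists_isBorel_mul_clear_column (M : Matrix (Fin n) (Fin n) ℂ) {i₀ j₀ : Fin n}
    (hbelow : ∀ i, i₀ < i → M i j₀ = 0) :
    ∃ U : Matrix (Fin n) (Fin n) ℂ, IsBorel U ∧ ∀ i j,
      (U * M) i j = if i = i₀ then M i j else M i j - M i j₀ / M i₀ j₀ * M i₀ j := by
  set u : Fin n → ℂ := fun i => if i = i₀ then 0 else M i j₀ / M i₀ j₀
  refine ⟨1 - vecMulVec u (Pi.single i₀ 1), isBorel_one_sub_vecMulVec fun i j hji => ?_,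
    fun i j => ?_⟩
  · rcases eq_or_ne j i₀ with rfl | hj
    · rcases hji.eq_or_lt with rfl | hlt
      · simp [u]
      · simp [u, hbelow i hlt]
    · simp [hj]
  · rw [sub_mul, one_mul, vecMulVec_mul, single_one_vecMul]
    by_cases hi : i = i₀ <;> simp [u, hi, vecMulVec_apply]

lemma exists_isBorel_mul_clear_row (M : Matrix (Fin n) (Fin n) ℂ) {i₀ j₀ : Fin n}
    (hleft : ∀ j, j < j₀ → M i₀ j = 0) :
    ∃ U : Matrix (Fin n) (Fin n) ℂ, IsBorel U ∧ ∀ i j,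
      (M * U) i j = if j = j₀ then M i j else M i j - M i j₀ * (M i₀ j / M i₀ j₀) := by
  set v : Fin n → ℂ := fun j => if j = j₀ then 0 else M i₀ j / M i₀ j₀
  refine ⟨1 - vecMulVec (Pi.single j₀ 1) v, isBorel_one_sub_vecMulVec fun i j hji => ?_,
    fun i j => ?_⟩
  · rcases eq_or_ne i j₀ with rfl | hi
    · rcases hji.eq_or_lt with rfl | hlt
      · simp [v]
      · simp [v, hleft j hlt]
    · simp [hi]
  · rw [mul_sub, mul_one, mul_vecMulVec, mulVec_single_one]
    by_cases hj : j = j₀ <;> simp [v, hj, vecMulVec_apply]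

def IsPivot (M : Matrix (Fin n) (Fin n) ℂ) (i j : Fin n) : Prop :=
  M i j ≠ 0 ∧ (∀ i', i' ≠ i → M i' j = 0) ∧ ∀ j', j' ≠ j → M i j' = 0

def ColumnsReduced (M : Matrix (Fin n) (Fin n) ℂ) (k : ℕ) : Prop :=
  ∀ j : Fin n, (j : ℕ) < k → ∃ i, IsPivot M i j

lemma IsPivot.congr {M N : Matrix (Fin n) (Fin n) ℂ} {i j : Fin n} (h : IsPivot M i j)
    (hrow : ∀ j', N i j' = M i j') (hcol : ∀ i', N i' j = M i' j) : IsPivot N i j := by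
  simp only [IsPivot, hrow, hcol]
  exact h

lemma ColumnsReduced.exists_lowest_entry {M : Matrix (Fin n) (Fin n) ℂ} {k : ℕ}
    (hM : ColumnsReduced M k) (hdet : IsUnit M.det) (hk : k < n) :
    ∃ i₀, M i₀ ⟨k, hk⟩ ≠ 0 ∧ (∀ i, i₀ < i → M i ⟨k, hk⟩ = 0) ∧
      ∀ j : Fin n, (j : ℕ) < k → M i₀ j = 0 := by
  have hcol : ∃ i, M i ⟨k, hk⟩ ≠ 0 := by
    by_contra! h
    exact not_isUnit_zero (det_eq_zero_of_column_eq_zero _ h ▸ hdet)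
  obtain ⟨i₀, hi₀, hmax⟩ := (univ.filter fun i => M i ⟨k, hk⟩ ≠ 0).exists_max_image id
    (let ⟨i, hi⟩ := hcol; ⟨i, by simpa using hi⟩)
  simp only [mem_filter, mem_univ, true_and, id] at hi₀ hmax
  refine ⟨i₀, hi₀, fun i hi => by_contra fun h => (hmax i h).not_gt hi, fun j hj => ?_⟩
  obtain ⟨r, hr⟩ := hM j hj
  refine hr.2.1 i₀ fun h => hi₀ ?_
  exact h ▸ hr.2.2 _ (Fin.ne_of_gt hj)

lemma ColumnsReduced.exists_isBorel_succ {M : Matrix (Fin n) (Fin n) ℂ} {k : ℕ}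
    (hM : ColumnsReduced M k) (hdet : IsUnit M.det) (hk : k < n) :
    ∃ U₁ U₂, IsBorel U₁ ∧ IsBorel U₂ ∧ ColumnsReduced (U₁ * M * U₂) (k + 1) := by
  obtain ⟨i₀, hi₀, hbelow, hrow₀⟩ := hM.exists_lowest_entry hdet hk
  set j₀ : Fin n := ⟨k, hk⟩
  -- Clear column `j₀` above `i₀`, then row `i₀` right of `j₀`. Earlier pivots survive because
  -- their rows vanish in column `j₀` and their columns vanish in row `i₀`.
  obtain ⟨U₁, hU₁, hA⟩ := exists_isBorel_mul_clear_column M hbelow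
  set A := U₁ * M
  have hAcol : ∀ i, A i j₀ = if i = i₀ then M i₀ j₀ else 0 := fun i => by
    rw [hA]
    split_ifs with h
    · rw [h]
    · rw [div_mul_cancel₀ _ hi₀, sub_self]
  have hc : A i₀ j₀ ≠ 0 := by rwa [hAcol, if_pos rfl]
  obtain ⟨U₂, hU₂, hB⟩ := exists_isBorel_mul_clear_row A (i₀ := i₀) (j₀ := j₀) fun j hj => by
    rw [hA, if_pos rfl]
    exact hrow₀ j hj
  refine ⟨U₁, U₂, hU₁, hU₂, fun j hj => ?_⟩
  rcases Nat.lt_succ_iff_lt_or_eq.mp hj with hj | hjk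
  · obtain ⟨r, hr⟩ := hM j hj
    have hjj₀ : j ≠ j₀ := Fin.ne_of_lt hj
    have hr₀ : r ≠ i₀ := fun h => hr.1 (h ▸ hrow₀ j hj)
    refine ⟨r, hr.congr (fun j' => ?_) (fun i' => ?_)⟩
    · rw [hB, hAcol, if_neg hr₀, hA, if_neg hr₀, hr.2.2 j₀ hjj₀.symm]
      simp
    · rw [hB, if_neg hjj₀, hA i₀ j, if_pos rfl, hrow₀ j hj, hA]
      simp [hrow₀ j hj]
  · obtain rfl : j = j₀ := Fin.ext hjk
    refine ⟨i₀, by rwa [hB, if_pos rfl], fun i hi => ?_, fun j hj => ?_⟩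
    · rw [hB, if_pos rfl, hAcol, if_neg hi]
    · rw [hB, if_neg hj, mul_div_cancel₀ _ hc, sub_self]

lemma ColumnsReduced.exists_eq_diagonal_mul_permMat {M : Matrix (Fin n) (Fin n) ℂ}
    (hM : ColumnsReduced M n) :
    ∃ (d : Fin n → ℂ) (π : Equiv.Perm (Fin n)), (∀ i, d i ≠ 0) ∧ M = diagonal d * permMat π := by
  choose r hr using fun j : Fin n => hM j j.isLt
  have hinj : Function.Injective r := fun j j' h =>
    by_contra fun hne => (h ▸ (hr j).1) ((hr j').2.2 j hne)
  set e := Equiv.ofBijective r hinj.bijective_of_finite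
  refine ⟨fun i => M i (e.symm i), e.symm, fun i => ?_, ?_⟩
  · have hpiv := (hr (e.symm i)).1
    rwa [show r (e.symm i) = i from e.apply_symm_apply i] at hpiv
  · ext i j
    simp only [diagonal_mul, permMat, mul_ite, mul_one, mul_zero]
    split_ifs with h
    · rw [h]
    · exact (hr j).2.1 i fun hi => h (by simp [e, hi])

theorem exists_isBruhatPerm {W : Matrix (Fin n) (Fin n) ℂ} (hW : IsUnit W.det) :
    ∃ π, IsBruhatPerm W π := by
  have hreduce : ∀ k ≤ n, ∃ U₁ U₂, IsBorel U₁ ∧ IsBorel U₂ ∧ ColumnsReduced (U₁ * W * U₂) k := by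
    intro k hk
    induction k with
    | zero => exact ⟨1, 1, isBorel_one, isBorel_one, fun j hj => absurd hj (Nat.not_lt_zero _)⟩
    | succ k ih =>
      obtain ⟨U₁, U₂, hU₁, hU₂, hred⟩ := ih (Nat.le_of_succ_le hk)
      have hdet : IsUnit (U₁ * W * U₂).det := by
        rw [det_mul, det_mul]
        exact (hU₁.2.mul hW).mul hU₂.2
      obtain ⟨V₁, V₂, hV₁, hV₂, hred'⟩ := hred.exists_isBorel_succ hdet hk
      refine ⟨V₁ * U₁, U₂ * V₂, hV₁.mul hU₁, hU₂.mul hV₂, ?_⟩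
      simpa only [Matrix.mul_assoc] using hred'
  obtain ⟨U₁, U₂, hU₁, hU₂, hred⟩ := hreduce n le_rfl
  obtain ⟨d, π, hd, hM⟩ := hred.exists_eq_diagonal_mul_permMat
  have hV₁ := hU₁.inv.mul (isBorel_diagonal hd)
  refine ⟨π, U₁⁻¹ * diagonal d, U₂⁻¹, hV₁.1, hU₂.inv.1, hV₁.2, hU₂.inv.2, ?_⟩
  calc W = (U₁⁻¹ * U₁) * W * (U₂ * U₂⁻¹) := by
        rw [nonsing_inv_mul _ hU₁.2, mul_nonsing_inv _ hU₂.2, Matrix.one_mul, Matrix.mul_one]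
    _ = U₁⁻¹ * (U₁ * W * U₂) * U₂⁻¹ := by simp only [Matrix.mul_assoc]
    _ = U₁⁻¹ * diagonal d * permMat π * U₂⁻¹ := by rw [hM]; simp only [Matrix.mul_assoc]

lemma IsBruhatPerm.apply_zero_eq_zero [NeZero n] {W : Matrix (Fin n) (Fin n) ℂ}
    {π : Equiv.Perm (Fin n)} (h : IsBruhatPerm W π) {i : Fin n} (hi : π⁻¹ 0 < i) : W i 0 = 0 := by
  obtain ⟨U₁, U₂, hU₁, hU₂, -, -, rfl⟩ := h
  have hU₁π : (U₁ * permMat π) i 0 = U₁ i (π⁻¹ 0) := by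
    rw [mul_apply, Finset.sum_eq_single (π⁻¹ 0)]
    · simp [permMat]
    · intro l _ hl
      simp [permMat, Equiv.Perm.eq_inv_iff_eq.not.mp hl]
    · simp
  rw [mul_apply, Finset.sum_eq_single 0, hU₁π, hU₁ i _ hi, zero_mul]
  · intro l _ hl
    rw [hU₂ l 0 (Fin.pos_iff_ne_zero.mpr hl), mul_zero]
  · simp

end Bruhat

lemma exists_equiv_fin_of_injective {α : Type*} [Fintype α] {L : Type*} [LinearOrder L] {g : α → L}
    (hg : Function.Injective g) :
    ∃ σ : α ≃ Fin (Fintype.card α), ∀ x y, g x ≤ g y → σ x ≤ σ y := by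
  let rk : α → Fin (Fintype.card α) := fun x =>
    ⟨#{y | g y < g x}, Finset.card_lt_univ_of_notMem (x := x) (by simp)⟩
  have hrk_le : ∀ x y, g x ≤ g y → rk x ≤ rk y := fun x y h =>
    Fin.mk_le_mk.2 <| card_le_card fun z hz => by
      simp only [mem_filter, mem_univ, true_and] at hz ⊢
      exact hz.trans_le h
  have hrk_lt : ∀ x y, g x < g y → rk x < rk y := fun x y h =>
    Fin.mk_lt_mk.2 <| card_lt_card <| (ssubset_iff_of_subset fun z hz => by
      simp only [mem_filter, mem_univ, true_and] at hz ⊢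
      exact hz.trans h).2 ⟨x, by simpa using h, by simp⟩
  have hinj : Function.Injective rk := fun x y h => by
    rcases lt_trichotomy (g x) (g y) with hlt | heq | hgt
    · exact absurd h (hrk_lt x y hlt).ne
    · exact hg heq
    · exact absurd h (hrk_lt y x hgt).ne'
  exact ⟨Equiv.ofBijective rk ((Fintype.bijective_iff_injective_and_card rk).2 ⟨hinj, by simp⟩),
    hrk_le⟩

section Poset

variable {α : Type*} [PartialOrder α]

lemma isUnit_det_cartan {n : ℕ} {σ : α ≃ Fin n} (hσ : IsLinExt σ) : IsUnit (cartan σ).det := by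
  have hlow : (cartan σ).IsLowerTriangular := fun i j hij => by
    have : ¬σ.symm j ≤ σ.symm i := fun hle => (hσ _ _ hle).not_gt (by simpa using hij)
    simp [cartan, this]
  rw [det_of_isLowerTriangular _ hlow]
  simp [cartan]

lemma ech_injective {n : ℕ} (σ : α ≃ Fin n) (π : Equiv.Perm (Fin n)) :
    Function.Injective (ech σ π) :=
  ((σ.trans π⁻¹).trans σ.symm).injective

lemma ech_eq_of_forall_le {n : ℕ} {σ : α ≃ Fin n} {π : Equiv.Perm (Fin n)}
    (hπ : IsBruhatPerm (cartan σ) π) {m M : α} (hm : ∀ x, σ m ≤ σ x) (hM : ∀ x, σ x ≤ σ M)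
    (hmM : m ≤ M) : ech σ π m = M := by
  have : NeZero n := ⟨(σ m).pos.ne'⟩
  have hm₀ : σ m = 0 := le_antisymm (by simpa using hm (σ.symm 0)) (Fin.zero_le _)
  have hle : σ M ≤ π⁻¹ 0 := le_of_not_gt fun hlt => by
    have := hπ.apply_zero_eq_zero hlt
    simp [cartan, ← hm₀, hmM] at this
  have : π⁻¹ 0 = σ M := le_antisymm (by simpa using hM (σ.symm (π⁻¹ 0))) hle
  simp [ech, hm₀, this]

lemma exists_isLinExt_first_last [Fintype α] {m M : α} (hm : IsMin m) (hM : IsMax M)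
    (hmM : m ≠ M) :
    ∃ σ : α ≃ Fin (Fintype.card α), IsLinExt σ ∧ (∀ x, σ m ≤ σ x) ∧ ∀ x, σ x ≤ σ M := by
  let g : α → Bool ×ₗ Bool ×ₗ LinearExtension α := fun x =>
    toLex (decide (x ≠ m), toLex (decide (x = M), toLinearExtension x))
  have hmono : Monotone g := by
    refine Prod.Lex.toLex_mono.comp (Monotone.prodMk (fun x y hxy => ?_)
      (Prod.Lex.toLex_mono.comp (Monotone.prodMk (fun x y hxy => ?_) toLinearExtension.monotone)))
    · simp only [Bool.le_iff_imp, decide_eq_true_eq]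
      exact fun hx hy => hx (hm.eq_of_le (hy ▸ hxy))
    · simp only [Bool.le_iff_imp, decide_eq_true_eq]
      exact fun hx => hM.eq_of_ge (hx ▸ hxy)
  obtain ⟨σ, hσ⟩ := exists_equiv_fin_of_injective (g := g) fun x y h =>
    congrArg (fun z => (ofLex (ofLex z).2).2) h
  refine ⟨σ, fun x y hxy => hσ x y (hmono hxy), fun x => hσ _ _ ?_, fun x => hσ _ _ ?_⟩
  · rcases eq_or_ne x m with rfl | hx <;> simp [g, Prod.Lex.le_iff, *]
  · rcases eq_or_ne x M with rfl | hx <;> rcases eq_or_ne x m with rfl | hx' <;>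
      simp [g, Prod.Lex.le_iff, *, hmM.symm]

end Poset

section Connected

variable {α : Type*} [PartialOrder α]

lemma exists_le_isMax [Finite α] (x : α) : ∃ M, x ≤ M ∧ IsMax M := by
  obtain ⟨M, hxM, hM⟩ := Finite.exists_le_maximal (p := (x ≤ ·)) le_rfl
  exact ⟨M, hxM, fun y hy => hM.2 (hxM.trans hy) hy⟩

lemma exists_isMin_le [Finite α] (x : α) : ∃ m, m ≤ x ∧ IsMin m :=
  exists_le_isMax (α := αᵒᵈ) x

lemma PosetConnected.dual (h : PosetConnected α) : PosetConnected αᵒᵈ := fun a b =>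
  Relation.ReflTransGen.lift OrderDual.toDual
    (fun _ _ hxy => hxy.symm.imp CovBy.toDual CovBy.toDual) _ _ (h a.ofDual b.ofDual)

lemma PosetConnected.exists_forall_le [Finite α] [Nonempty α] (hconn : PosetConnected α)
    (huniq : ∀ x M M' : α, IsMax M → IsMax M' → x ≤ M → x ≤ M' → M = M') :
    ∃ T : α, ∀ a, a ≤ T := by
  obtain ⟨a⟩ := ‹Nonempty α›
  obtain ⟨T, haT, hT⟩ := exists_le_isMax a
  refine ⟨T, fun b => ?_⟩
  induction hconn a b with
  | refl => exact haT
  | @tail u v _ huv ih =>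
    rcases huv with huv | hvu
    · obtain ⟨M, hvM, hM⟩ := exists_le_isMax v
      exact huniq u M T hM hT (huv.le.trans hvM) ih ▸ hvM
    · exact hvu.le.trans ih

lemma isMax_unique_above [Finite α] {f : α → α}
    (hf : ∀ m M, IsMin m → IsMax M → m ≤ M → m ≠ M → f m = M) {x M M' : α} (hM : IsMax M)
    (hM' : IsMax M') (hxM : x ≤ M) (hxM' : x ≤ M') : M = M' := by
  obtain ⟨m, hmx, hm⟩ := exists_isMin_le x
  by_cases hmax : IsMax m
  · exact (hmax.eq_of_le (hmx.trans hxM)).symm.trans (hmax.eq_of_le (hmx.trans hxM'))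
  · rw [← hf m M hm hM (hmx.trans hxM) fun h => hmax (h ▸ hM),
      ← hf m M' hm hM' (hmx.trans hxM') fun h => hmax (h ▸ hM')]

lemma isMin_unique_below [Finite α] {f : α → α}
    (hf : ∀ m M, IsMin m → IsMax M → m ≤ M → m ≠ M → f m = M) (hinj : Function.Injective f)
    {x m m' : α} (hm : IsMin m) (hm' : IsMin m') (hmx : m ≤ x) (hm'x : m' ≤ x) : m = m' := by
  obtain ⟨M, hxM, hM⟩ := exists_le_isMax x
  by_cases hmin : IsMin M
  · exact (hmin.eq_of_ge (hmx.trans hxM)).symm.trans (hmin.eq_of_ge (hm'x.trans hxM))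
  · exact hinj ((hf m M hm hM (hmx.trans hxM) fun h => hmin (h ▸ hm)).trans
      (hf m' M hm' hM (hm'x.trans hxM) fun h => hmin (h ▸ hm')).symm)

end Connected

lemma EchIndep.ech_eq_of_isMin_of_isMax {α : Type*} [PartialOrder α] [Fintype α]
    (hind : EchIndep α) {σ : α ≃ Fin (Fintype.card α)} {π : Equiv.Perm (Fin (Fintype.card α))}
    (hσ : IsLinExt σ) (hπ : IsBruhatPerm (cartan σ) π) {m M : α} (hm : IsMin m) (hM : IsMax M)
    (hmM : m ≤ M) (hne : m ≠ M) : ech σ π m = M := by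
  obtain ⟨τ, hτ, hτm, hτM⟩ := exists_isLinExt_first_last hm hM hne
  obtain ⟨ρ, hρ⟩ := exists_isBruhatPerm (isUnit_det_cartan hτ)
  rw [hind σ τ π ρ hσ hτ hπ hρ]
  exact ech_eq_of_forall_le hρ hτm hτM hmM

/-- Every echelon-independent connected finite poset is bounded: it has a
minimum element and a maximum element. -/
theorem stmt12 {α : Type*} [PartialOrder α] [Fintype α] [Nonempty α]
    (hconn : PosetConnected α) (hind : EchIndep α) :
    (∃ m : α, ∀ a : α, m ≤ a) ∧ (∃ M : α, ∀ a : α, a ≤ M) := by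
  obtain ⟨σ, hσg⟩ := exists_equiv_fin_of_injective (g := toLinearExtension (α := α)) fun _ _ h => h
  have hσ : IsLinExt σ := fun x y hxy => hσg x y (toLinearExtension.monotone hxy)
  obtain ⟨π, hπ⟩ := exists_isBruhatPerm (isUnit_det_cartan hσ)
  have hech : ∀ m M, IsMin m → IsMax M → m ≤ M → m ≠ M → ech σ π m = M :=
    fun _ _ => hind.ech_eq_of_isMin_of_isMax hσ hπ
  exact ⟨hconn.dual.exists_forall_le fun _ _ _ => isMin_unique_below hech (ech_injective σ π),
    hconn.exists_forall_le fun _ _ _ => isMax_unique_above hech⟩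
end

section
/- Let σ be a linear extension of a finite poset R and let x, y ∈ R. Suppose there exists ρ : Pre_σ(x) → ℂ with ρ(x) ≠ 0 such that for every u ∈ Suc_σ(y) with u ≠ y, ∑_{w ∈ Pre_σ(x), w ≤ u} ρ(w) = 0. Then σ(Ech_σ(x)) ≤ σ(y). -/
open scoped Classical
open Finset

/-! Write `W = U₁ P U₂` for the Cartan matrix `W`. The vector `c` extending `ρ`
by zero past `σ x` has last nonzero entry at `σ x`, and `U₂` preserves this. The hypothesis
on `ρ` says `W c` vanishes past `σ y`, and `U₁⁻¹` preserves that, so `P (U₂ c)`, i.e.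
`U₂ c ∘ π`, vanishes past `σ y`. Since `(U₂ c) (σ x) ≠ 0`, this forces `π⁻¹ (σ x) ≤ σ y`. -/

namespace Matrix

section Semiring

variable {m R : Type*} [Fintype m] [LinearOrder m] [Semiring R]
  {M : Matrix m m R} {v : m → R} {i : m}

theorem IsUpperTriangular.mulVec_apply_eq_zero (hM : M.IsUpperTriangular)
    (hv : ∀ j, i ≤ j → v j = 0) : (M *ᵥ v) i = 0 :=
  sum_eq_zero fun j _ => by
    rcases lt_or_ge j i with h | h
    · exact mul_eq_zero_of_left (hM h) _
    · exact mul_eq_zero_of_right _ (hv j h)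

theorem IsUpperTriangular.mulVec_apply_eq_diag_mul (hM : M.IsUpperTriangular)
    (hv : ∀ j, i < j → v j = 0) : (M *ᵥ v) i = M i i * v i := by
  refine sum_eq_single i (fun j _ hj => ?_) (by simp)
  rcases hj.lt_or_gt with h | h
  · exact mul_eq_zero_of_left (hM h) _
  · exact mul_eq_zero_of_right _ (hv j h)

end Semiring

theorem IsUpperTriangular.diag_ne_zero {m R : Type*} [Fintype m] [LinearOrder m]
    [CommRing R] [Nontrivial R] {M : Matrix m m R} (hM : M.IsUpperTriangular)
    (hdet : IsUnit M.det) (i : m) : M i i ≠ 0 := by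
  rw [det_of_isUpperTriangular hM] at hdet
  exact fun h => hdet.ne_zero (prod_eq_zero (mem_univ i) h)

end Matrix

open Matrix

theorem permMat_mulVec {n : ℕ} (π : Equiv.Perm (Fin n)) (v : Fin n → ℂ) :
    permMat π *ᵥ v = v ∘ π := by
  ext i
  simp [permMat, mulVec, dotProduct]

theorem IsBruhatPerm.inv_apply_le {n : ℕ} {W : Matrix (Fin n) (Fin n) ℂ}
    {π : Equiv.Perm (Fin n)} (hπ : IsBruhatPerm W π) {c : Fin n → ℂ} {k l : Fin n}
    (hc : ∀ j, l < j → c j = 0) (hcl : c l ≠ 0) (hWc : ∀ i, k < i → (W *ᵥ c) i = 0) :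
    π⁻¹ l ≤ k := by
  obtain ⟨U₁, U₂, (hU₁ : U₁.IsUpperTriangular), (hU₂ : U₂.IsUpperTriangular), hdet₁, hdet₂, rfl⟩ :=
    hπ
  have hdl : (U₂ *ᵥ c) l ≠ 0 := by
    rw [hU₂.mulVec_apply_eq_diag_mul hc]
    exact mul_ne_zero (hU₂.diag_ne_zero hdet₂ l) hcl
  have hdπ : (U₂ *ᵥ c) ∘ π = U₁⁻¹ *ᵥ ((U₁ * permMat π * U₂) *ᵥ c) := by
    rw [mulVec_mulVec, ← Matrix.mul_assoc, ← Matrix.mul_assoc, nonsing_inv_mul _ hdet₁,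
      Matrix.one_mul, ← mulVec_mulVec, permMat_mulVec]
  have : Invertible U₁ := U₁.invertibleOfIsUnitDet hdet₁
  have hU₁inv : U₁⁻¹.IsUpperTriangular := blockTriangular_inv_of_blockTriangular hU₁
  by_contra! hlt
  apply hdl
  rw [← π.apply_symm_apply l, ← Function.comp_apply (f := U₂ *ᵥ c), hdπ]
  exact hU₁inv.mulVec_apply_eq_zero fun j hj => hWc j (hlt.trans_le hj)

theorem cartan_mulVec_apply {α : Type*} [PartialOrder α] [Fintype α] {n : ℕ} (σ : α ≃ Fin n)
    (c : Fin n → ℂ) (i : Fin n) :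
    (cartan σ *ᵥ c) i = ∑ w ∈ univ.filter (· ≤ σ.symm i), c (σ w) := by
  rw [sum_filter, mulVec, dotProduct, ← σ.sum_comp]
  simp [cartan]

theorem stmt15_general {α : Type*} [PartialOrder α] [Fintype α] {n : ℕ}
    (σ : α ≃ Fin n)
    (π : Equiv.Perm (Fin n)) (hπ : IsBruhatPerm (cartan σ) π)
    (x y : α) (ρ : α → ℂ) (hρx : ρ x ≠ 0)
    (hρ : ∀ u : α, σ y ≤ σ u → u ≠ y →
      ∑ w ∈ Finset.univ.filter (fun w : α => σ w ≤ σ x ∧ w ≤ u), ρ w = 0) :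
    σ (ech σ π x) ≤ σ y := by
  set c : Fin n → ℂ := fun j => if j ≤ σ x then ρ (σ.symm j) else 0
  have hWc : ∀ i, σ y < i → (cartan σ *ᵥ c) i = 0 := by
    intro i hi
    rw [cartan_mulVec_apply, ← hρ (σ.symm i) (by simpa using hi.le) (by rintro rfl; simp at hi),
      sum_filter, sum_filter]
    refine sum_congr rfl fun w _ => ?_
    by_cases hw : w ≤ σ.symm i <;> simp [c, hw]
  simpa [ech] using hπ.inv_apply_le (fun j hj => if_neg hj.not_ge) (by simpa [c]) hWc

/-- If there is `ρ` on `Pre_σ(x)` with `ρ x ≠ 0` whose partial sums vanish on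
principal ideals of elements of `Suc_σ(y) \ {y}`, then `σ(Ech_σ x) ≤ σ y`. -/
theorem stmt15 {α : Type*} [PartialOrder α] [Fintype α] {n : ℕ}
    (σ : α ≃ Fin n) (hσ : IsLinExt σ)
    (π : Equiv.Perm (Fin n)) (hπ : IsBruhatPerm (cartan σ) π)
    (x y : α) (ρ : α → ℂ) (hρx : ρ x ≠ 0)
    (hρ : ∀ u : α, σ y ≤ σ u → u ≠ y →
      ∑ w ∈ Finset.univ.filter (fun w : α => σ w ≤ σ x ∧ w ≤ u), ρ w = 0) :
    σ (ech σ π x) ≤ σ y :=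
  stmt15_general σ π hπ x y ρ hρx hρ
end

section
/- Let L be a finite lattice that is not meet-semidistributive (in the sense that some set {z : z ∧ y = x}, for x ≤ y, lacks a maximum). Then there exists a join-irreducible element j of L such that the set {z ∈ L : z ∧ j = j_*} has at least two distinct maximal elements, and both of these maximal elements are meet-irreducible. -/
/-!
For the characterization of meet-semidistributivity, take `x ≤ y`, a maximal `m` with
`m ⊓ y = x`, and any `z` with `z ⊓ y = x`. If `(z ⊔ m) ⊓ y ≠ x`, a minimal `j ≤ (z ⊔ m) ⊓ y`
not below `x` is join-irreducible with `j_* = x ⊓ j`, and both `z` and `m` meet `j` in `j_*`;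
the maximum `κ(j)` of `{w | w ⊓ j = j_*}` then lies above `z ⊔ m ≥ j`, which is absurd.
Otherwise `z ⊔ m = m` by maximality, i.e. `z ≤ m`.

A maximal element `m` of `{z | z ⊓ j = j_*}` is meet-irreducible: every upper cover `v` of `m`
must contain `j` (otherwise `v ⊓ j < j` forces `v ⊓ j = j_*`, against maximality), so `v = m ⊔ j`.
-/

/-- A finite lattice is meet-semidistributive if for all `x ≤ y` the set
`{z : z ⊓ y = x}` has a maximum element. -/
def MeetSemidistrib (L : Type*) [Lattice L] : Prop :=
  ∀ x y : L, x ≤ y → ∃ m : L, m ⊓ y = x ∧ ∀ z : L, z ⊓ y = x → z ≤ m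

/-- In a finite lattice this says that `j` is join-irreducible with `j_* = jstar`. -/
def IsUniqueLowerCover {α : Type*} [Preorder α] (jstar j : α) : Prop :=
  jstar ⋖ j ∧ ∀ w, w ⋖ j → w = jstar

theorem exists_maximal_ne_of_not_exists_isGreatest {α : Type*} [PartialOrder α]
    [WellFoundedGT α] {P : α → Prop} (hP : ∃ a, P a) (h : ¬ ∃ k, IsGreatest {z | P z} k) :
    ∃ m m', m ≠ m' ∧ Maximal P m ∧ Maximal P m' := by
  obtain ⟨m, hm⟩ := exists_maximal_of_wellFoundedGT P hP
  obtain ⟨z, hz, hzm⟩ : ∃ z, P z ∧ ¬ z ≤ m := by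
    by_contra! hle
    exact h ⟨m, hm.prop, hle⟩
  obtain ⟨m', hzm', hm'⟩ := exists_maximal_ge_of_wellFoundedGT P z hz
  exact ⟨m, m', fun hmm' => hzm (hmm' ▸ hzm'), hm, hm'⟩

section Lattice

variable {L : Type*} [Lattice L]

theorem not_le_of_covBy_of_inf_eq {jstar j z : L} (hcov : jstar ⋖ j) (hz : z ⊓ j = jstar) :
    ¬ j ≤ z :=
  fun hjz => hcov.ne (hz.symm.trans (inf_eq_right.2 hjz))

theorem inf_eq_inf_of_le_of_inf_eq {x y z j : L} (hjy : j ≤ y) (hz : z ⊓ y = x) :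
    z ⊓ j = x ⊓ j := by
  rw [← hz, inf_assoc, inf_eq_right.2 hjy]

theorem IsUniqueLowerCover.le_of_lt [IsStronglyCoatomic L] {jstar j a : L}
    (hj : IsUniqueLowerCover jstar j) (ha : a < j) : a ≤ jstar := by
  obtain ⟨w, haw, hwj⟩ := exists_le_covBy_of_lt ha
  exact hj.2 w hwj ▸ haw

theorem exists_le_isUniqueLowerCover_inf [WellFoundedLT L] {x t : L} (ht : ¬ t ≤ x) :
    ∃ j ≤ t, IsUniqueLowerCover (x ⊓ j) j := by
  obtain ⟨j, hjt, hj⟩ := exists_minimal_le_of_wellFoundedLT (¬ · ≤ x) t ht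
  have hbelow : ∀ a < j, a ≤ x ⊓ j := fun a ha =>
    le_inf (not_not.1 (hj.not_prop_of_lt ha)) ha.le
  have hcov : x ⊓ j ⋖ j :=
    ⟨inf_lt_right.2 hj.prop, fun c hc hcj => (hbelow c hcj).not_gt hc⟩
  exact ⟨j, hjt, hcov, fun w hw => (hbelow w hw.lt).eq_of_not_lt fun hlt => hw.2 hlt hcov.lt⟩

theorem meetSemidistrib_of_forall_isUniqueLowerCover [WellFoundedLT L] [WellFoundedGT L]
    (h : ∀ jstar j : L, IsUniqueLowerCover jstar j → ∃ k, IsGreatest {z | z ⊓ j = jstar} k) :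
    MeetSemidistrib L := by
  intro x y hxy
  obtain ⟨m, hm⟩ := exists_maximal_of_wellFoundedGT (· ⊓ y = x) ⟨x, inf_eq_left.2 hxy⟩
  refine ⟨m, hm.prop, fun z hz => ?_⟩
  by_cases hjoin : (z ⊔ m) ⊓ y = x
  · exact le_sup_left.trans (hm.eq_of_ge hjoin le_sup_right).le
  have hxt : x ≤ (z ⊔ m) ⊓ y := le_inf ((hz ▸ inf_le_left).trans le_sup_left) hxy
  obtain ⟨j, hjt, hj⟩ := exists_le_isUniqueLowerCover_inf fun htx => hjoin (htx.antisymm hxt)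
  obtain ⟨k, hk, hk_ub⟩ := h _ j hj
  have hjy : j ≤ y := hjt.trans inf_le_right
  have hzk : z ≤ k := hk_ub (inf_eq_inf_of_le_of_inf_eq hjy hz)
  have hmk : m ≤ k := hk_ub (inf_eq_inf_of_le_of_inf_eq hjy hm.prop)
  have hjk : j ≤ k := (hjt.trans inf_le_left).trans (sup_le hzk hmk)
  exact absurd hjk (not_le_of_covBy_of_inf_eq hj.1 hk)

variable [IsStronglyCoatomic L] {jstar j m : L}

theorem IsUniqueLowerCover.eq_sup_of_covBy (hj : IsUniqueLowerCover jstar j)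
    (hm : Maximal (· ⊓ j = jstar) m) {v : L} (hv : m ⋖ v) : v = m ⊔ j := by
  have hjv : j ≤ v := by
    by_contra hjv
    have hvj : v ⊓ j = jstar :=
      (hj.le_of_lt (inf_lt_right.2 hjv)).antisymm (hm.prop ▸ inf_le_inf_right j hv.le)
    exact hv.lt.ne' (hm.eq_of_ge hvj hv.le)
  have hmj : m ⊔ j ≠ m := mt sup_eq_left.1 (not_le_of_covBy_of_inf_eq hj.1 hm.prop)
  exact ((hv.eq_or_eq le_sup_left (sup_le hv.le hjv)).resolve_left hmj).symm

theorem IsUniqueLowerCover.existsUnique_covBy [IsStronglyAtomic L]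
    (hj : IsUniqueLowerCover jstar j) (hm : Maximal (· ⊓ j = jstar) m) : ∃! w, m ⋖ w := by
  have hj_not_le : ¬ j ≤ m := not_le_of_covBy_of_inf_eq hj.1 hm.prop
  obtain ⟨w, hmw, -⟩ := exists_covBy_le_of_lt (left_lt_sup.2 hj_not_le)
  exact ⟨w, hmw, fun v hv => (hj.eq_sup_of_covBy hm hv).trans (hj.eq_sup_of_covBy hm hmw).symm⟩

end Lattice

/-- If a finite lattice is not meet-semidistributive, then there is a
join-irreducible `j` (with unique lower cover `jstar`) such that
`{z : z ⊓ j = jstar}` has two distinct maximal elements, and each such maximal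
element is meet-irreducible. -/
theorem stmt18 {L : Type*} [Lattice L] [Fintype L]
    (hL : ¬ MeetSemidistrib L) :
    ∃ j jstar m m' : L,
      jstar ⋖ j ∧ (∀ w : L, w ⋖ j → w = jstar) ∧
      m ≠ m' ∧
      m ⊓ j = jstar ∧ m' ⊓ j = jstar ∧
      (∀ z : L, z ⊓ j = jstar → m ≤ z → z = m) ∧
      (∀ z : L, z ⊓ j = jstar → m' ≤ z → z = m') ∧
      (∃! w : L, m ⋖ w) ∧ (∃! w : L, m' ⋖ w) := by
  obtain ⟨jstar, j, hj, hno_max⟩ : ∃ jstar j : L,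
      IsUniqueLowerCover jstar j ∧ ¬ ∃ k, IsGreatest {z | z ⊓ j = jstar} k := by
    by_contra! h
    exact hL (meetSemidistrib_of_forall_isUniqueLowerCover h)
  obtain ⟨m, m', hne, hm, hm'⟩ :=
    exists_maximal_ne_of_not_exists_isGreatest (P := (· ⊓ j = jstar))
      ⟨jstar, inf_eq_left.2 hj.1.le⟩ hno_max
  exact ⟨j, jstar, m, m', hj.1, hj.2, hne, hm.prop, hm'.prop,
    fun _ hz hmz => hm.eq_of_ge hz hmz, fun _ hz hmz => hm'.eq_of_ge hz hmz,
    hj.existsUnique_covBy hm, hj.existsUnique_covBy hm'⟩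
end
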